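/- arXiv:2407.05827 — 5 statements merged into one kernel-verified Lean document; each statement's English description precedes it below -/
import Mathlib

section
/- Let D be a digraph, k and ℓ integers with k ≤ Δ+1−ℓ, where D is Δ-diregular (every vertex has in-degree and out-degree exactly Δ). If D admits a partial (k,ℓ)-dicolouring, then the dichromatic number of D is at most Δ+1−ℓ. -/
open Relation

/-- Out-degree of a vertex in a digraph given by an arc relation. -/
noncomputable def outDeg {V : Type*} (A : V → V → Prop) (v : V) : ℕ := {u | A v u}.ncard

/-- In-degree of a vertex. -/
noncomputable def inDeg {V : Type*} (A : V → V → Prop) (v : V) : ℕ := {u | A u v}.ncard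

/-- A `k`-dicolouring: every colour class induces an acyclic subdigraph. -/
def IsDicol {V : Type*} (A : V → V → Prop) {k : ℕ} (c : V → Fin k) : Prop :=
  ∀ v, ¬ TransGen (fun x y => A x y ∧ c x = c y) v v

/-- The dichromatic number. -/
noncomputable def dichrom {V : Type*} (A : V → V → Prop) : ℕ :=
  sInf {k | ∃ c : V → Fin k, IsDicol A c}

/-! ### Auxiliary lemmas -/

/-- Counting lemma: if each colour in `P` appears at least twice on `s`,
then the number of colours on `s` plus `|P|` is at most `|s|`. -/
lemma count_aux {α β : Type*} [DecidableEq α] [DecidableEq β] (f : α → β) (P : Finset β) :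
    ∀ s : Finset α, (∀ p ∈ P, ∃ u ∈ s, ∃ w ∈ s, u ≠ w ∧ f u = p ∧ f w = p) →
      (s.image f).card + P.card ≤ s.card := by
  induction P using Finset.induction_on with
  | empty => intro s _; simpa using Finset.card_image_le
  | @insert p P hp ih =>
    intro s hw
    obtain ⟨u, hu, w, hw', huw, hfu, hfw⟩ := hw p (Finset.mem_insert_self _ _)
    have hwit : ∀ q ∈ P, ∃ u' ∈ s.erase w, ∃ w' ∈ s.erase w, u' ≠ w' ∧ f u' = q ∧ f w' = q := by
      intro q hq
      obtain ⟨u', hu', w', hw'', hne, h1, h2⟩ := hw q (Finset.mem_insert_of_mem hq)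
      have hqp : q ≠ p := fun h => hp (h ▸ hq)
      refine ⟨u', Finset.mem_erase.mpr ⟨fun h => hqp (by rw [← h1, h, hfw]), hu'⟩,
        w', Finset.mem_erase.mpr ⟨fun h => hqp (by rw [← h2, h, hfw]), hw''⟩, hne, h1, h2⟩
    have h2 := ih (s.erase w) hwit
    have hsub : s.image f ⊆ (s.erase w).image f := by
      intro b hb
      obtain ⟨a, ha, rfl⟩ := Finset.mem_image.mp hb
      by_cases haw : a = w
      · subst haw
        rw [hfw, ← hfu]
        exact Finset.mem_image_of_mem _ (Finset.mem_erase.mpr ⟨huw, hu⟩)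
      · exact Finset.mem_image_of_mem _ (Finset.mem_erase.mpr ⟨haw, ha⟩)
    have h1 : (s.image f).card ≤ ((s.erase w).image f).card :=
      Finset.card_le_card hsub
    have h3 : (s.erase w).card = s.card - 1 := Finset.card_erase_of_mem hw'
    have h4 : 0 < s.card := Finset.card_pos.mpr ⟨w, hw'⟩
    rw [Finset.card_insert_of_notMem hp]
    omega

/-- If `R` holds along a cycle through `v`, and on the "cycle part" `R` implies `R'`,
then there is an `R'`-cycle through `v`. -/
lemma cyc_mono {α : Type*} {R R' : α → α → Prop} {v : α}
    (h : TransGen R v v)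
    (hW : ∀ a b, TransGen R v a → TransGen R b v → R a b → R' a b) :
    TransGen R' v v := by
  have key : ∀ a b, TransGen R a b → TransGen R v a → TransGen R b v → TransGen R' a b := by
    intro a b hab
    induction hab with
    | single h1 => exact fun ha hb => TransGen.single (hW _ _ ha hb h1)
    | tail h1 h2 ih =>
      exact fun ha hb =>
        TransGen.tail (ih ha ((TransGen.single h2).trans hb)) (hW _ _ (ha.trans h1) hb h2)
  exact key v v h h h

section Greedy

variable {V : Type*} [Fintype V]

open Classical in
noncomputable def nbrD (A : V → V → Prop) {k : ℕ} (ℓ : ℕ) (c : V → Option (Fin k)) (v : V) :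
    Set V :=
  if ℓ ≤ {i : Fin k | ∃ u, A u v ∧ ∃ w, A w v ∧ u ≠ w ∧ c u = some i ∧ c w = some i}.ncard
  then {u | A u v} else {u | A v u}

/-- Colour of a precoloured vertex, transported to `Fin m`. -/
noncomputable def preD {k m : ℕ} (hkm : k ≤ m) (hm0 : 0 < m) (c : V → Option (Fin k)) (u : V) :
    Fin m :=
  ((c u).map (Fin.castLE hkm)).getD ⟨0, hm0⟩

open Classical in
noncomputable def bodyD (A : V → V → Prop) {k m : ℕ} (ℓ : ℕ) (hkm : k ≤ m) (hm0 : 0 < m)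
    (c : V → Option (Fin k)) {n : ℕ} (e : V ≃ Fin n) :
    (x : Fin n) → (∀ y : Fin n, y < x → Fin m) → Fin m := fun x prev =>
  if c (e.symm x) = none then
    (if h2 : ∃ jm : Fin m, jm ∉ Finset.univ.filter (fun jm => ∃ u, u ∈ nbrD A ℓ c (e.symm x) ∧
        ((c u ≠ none ∧ preD hkm hm0 c u = jm) ∨ ∃ hlt : e u < x, c u = none ∧ prev (e u) hlt = jm))
      then Classical.choose h2 else ⟨0, hm0⟩)
  else preD hkm hm0 c (e.symm x)

/-- The greedy colouring, indexed by `Fin n`. -/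
noncomputable def goD (A : V → V → Prop) {k m : ℕ} (ℓ : ℕ) (hkm : k ≤ m) (hm0 : 0 < m)
    (c : V → Option (Fin k)) {n : ℕ} (e : V ≃ Fin n) : Fin n → Fin m :=
  WellFounded.fix wellFounded_lt (bodyD A ℓ hkm hm0 c e)

open Classical in
noncomputable def FFD (A : V → V → Prop) {k m : ℕ} (ℓ : ℕ) (hkm : k ≤ m) (hm0 : 0 < m)
    (c : V → Option (Fin k)) {n : ℕ} (e : V ≃ Fin n) (x : Fin n) : Finset (Fin m) :=
  Finset.univ.filter (fun jm => ∃ u, u ∈ nbrD A ℓ c (e.symm x) ∧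
    ((c u ≠ none ∧ preD hkm hm0 c u = jm) ∨
      ∃ hlt : e u < x, c u = none ∧ goD A ℓ hkm hm0 c e (e u) = jm))

variable {A : V → V → Prop} {k m ℓ : ℕ} {hkm : k ≤ m} {hm0 : 0 < m}
  {c : V → Option (Fin k)} {n : ℕ} {e : V ≃ Fin n}

lemma goD_eq (x : Fin n) :
    goD A ℓ hkm hm0 c e x = bodyD A ℓ hkm hm0 c e x (fun y _ => goD A ℓ hkm hm0 c e y) :=
  WellFounded.fix_eq _ _ _

lemma goD_eq_pre {x : Fin n} {j : Fin k} (hx : c (e.symm x) = some j) :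
    goD A ℓ hkm hm0 c e x = Fin.castLE hkm j := by
  rw [goD_eq]
  simp [bodyD, hx, preD]

lemma goD_eq_new {x : Fin n} (hx : c (e.symm x) = none) :
    goD A ℓ hkm hm0 c e x =
      (if h2 : ∃ jm : Fin m, jm ∉ FFD A ℓ hkm hm0 c e x
        then Classical.choose h2 else ⟨0, hm0⟩) := by
  rw [goD_eq]
  simp only [bodyD, hx, if_true, eq_self_iff_true]
  rfl

end Greedy

theorem stmt_1 {V : Type*} [Fintype V] (A : V → V → Prop) (hirr : Irreflexive A)
    (Δ k ℓ : ℕ) (hk : k ≤ Δ + 1 - ℓ)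
    (hreg : ∀ v, outDeg A v = Δ ∧ inDeg A v = Δ)
    (c : V → Option (Fin k))
    (hacyc : ∀ v, ¬ TransGen (fun x y => A x y ∧ ∃ i, c x = some i ∧ c y = some i) v v)
    (hrep : ∀ v,
      ℓ ≤ {i : Fin k | ∃ u, A u v ∧ ∃ w, A w v ∧ u ≠ w ∧ c u = some i ∧ c w = some i}.ncard ∨
      ℓ ≤ {i : Fin k | ∃ u, A v u ∧ ∃ w, A v w ∧ u ≠ w ∧ c u = some i ∧ c w = some i}.ncard) :
    dichrom A ≤ Δ + 1 - ℓ := by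
  classical
  rcases isEmpty_or_nonempty V with hV | hV
  · refine le_trans (Nat.sInf_le ?_) (Nat.zero_le _)
    exact ⟨fun v => (hV.elim v), fun v => (hV.elim v)⟩
  obtain ⟨v0⟩ := hV
  set m := Δ + 1 - ℓ with hmdef
  have hcardk : ∀ (S : Set (Fin k)), S.ncard ≤ k := fun S =>
    le_trans (Set.ncard_le_ncard (Set.subset_univ S) Set.finite_univ)
      (by simp [Set.ncard_univ])
  have hlk : ℓ ≤ k := by
    rcases hrep v0 with h | h
    · exact le_trans h (hcardk _)
    · exact le_trans h (hcardk _)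
  have hm0 : 0 < m := by omega
  have hkm : k ≤ m := hk
  set e := Fintype.equivFin V with he
  set col : V → Fin m := fun v => goD A ℓ hkm hm0 c e (e v) with hcoldef
  -- side-neighbourhood facts
  have hnbr_card : ∀ v, (nbrD A ℓ c v).ncard = Δ := by
    intro v
    unfold nbrD
    split
    · exact (hreg v).2
    · exact (hreg v).1
  have hnbr_rep : ∀ v, ∃ P : Set (Fin k), ℓ ≤ P.ncard ∧
      ∀ i ∈ P, ∃ u ∈ nbrD A ℓ c v, ∃ w ∈ nbrD A ℓ c v,
        u ≠ w ∧ c u = some i ∧ c w = some i := by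
    intro v
    unfold nbrD
    split
    · next h =>
      exact ⟨_, h, fun i hi => by
        obtain ⟨u, hu, w, hw, hne, h1, h2⟩ := hi
        exact ⟨u, hu, w, hw, hne, h1, h2⟩⟩
    · next h =>
      rcases hrep v with h' | h'
      · exact absurd h' h
      · exact ⟨_, h', fun i hi => by
          obtain ⟨u, hu, w, hw, hne, h1, h2⟩ := hi
          exact ⟨u, hu, w, hw, hne, h1, h2⟩⟩
  -- colour of precoloured vertices
  have hcol_pre : ∀ (u : V) (j : Fin k), c u = some j → col u = Fin.castLE hkm j := by
    intro u j hj
    exact goD_eq_pre (by simpa using hj)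
  -- cardinality of the forbidden set
  have hFF_card : ∀ x : Fin (Fintype.card V), (FFD A ℓ hkm hm0 c e x).card + ℓ ≤ Δ := by
    intro x
    set v := e.symm x with hv
    set T : Finset V := Finset.univ.filter
      (fun u => u ∈ nbrD A ℓ c v ∧ (c u ≠ none ∨ e u < x)) with hT
    have hTsub : T ⊆ (nbrD A ℓ c v).toFinset := by
      intro u hu
      rw [Set.mem_toFinset]
      exact ((Finset.mem_filter.mp hu).2).1
    have hTcard : T.card ≤ Δ := by
      calc T.card ≤ (nbrD A ℓ c v).toFinset.card := Finset.card_le_card hTsub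
        _ = (nbrD A ℓ c v).ncard := (Set.ncard_eq_toFinset_card' _).symm
        _ = Δ := hnbr_card v
    obtain ⟨P, hPcard, hPwit⟩ := hnbr_rep v
    set f : V → Fin m := fun u => goD A ℓ hkm hm0 c e (e u) with hf
    set Pf : Finset (Fin m) := P.toFinset.image (Fin.castLE hkm) with hPf
    have hPfcard : ℓ ≤ Pf.card := by
      rw [hPf, Finset.card_image_of_injective _ (Fin.castLE_injective hkm)]
      rw [← Set.ncard_eq_toFinset_card']
      exact hPcard
    have hwit : ∀ p ∈ Pf, ∃ u ∈ T, ∃ w ∈ T, u ≠ w ∧ f u = p ∧ f w = p := by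
      intro p hp
      obtain ⟨i, hi, rfl⟩ := Finset.mem_image.mp hp
      rw [Set.mem_toFinset] at hi
      obtain ⟨u, hu, w, hw, hne, h1, h2⟩ := hPwit i hi
      refine ⟨u, Finset.mem_filter.mpr ⟨Finset.mem_univ _, hu, Or.inl (by simp [h1])⟩,
        w, Finset.mem_filter.mpr ⟨Finset.mem_univ _, hw, Or.inl (by simp [h2])⟩, hne, ?_, ?_⟩
      · exact goD_eq_pre (by simpa using h1)
      · exact goD_eq_pre (by simpa using h2)
    have hcount := count_aux f Pf T hwit
    have hsub2 : FFD A ℓ hkm hm0 c e x ⊆ T.image f := by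
      intro jm hjm
      rw [FFD, Finset.mem_filter] at hjm
      obtain ⟨-, u, hu, hcase⟩ := hjm
      rcases hcase with ⟨hne, hpre⟩ | ⟨hlt, hcnone, hgo⟩
      · obtain ⟨j, hj⟩ := Option.ne_none_iff_exists'.mp hne
        have hgoeq : goD A ℓ hkm hm0 c e (e u) = Fin.castLE hkm j :=
          goD_eq_pre (by simpa using hj)
        refine Finset.mem_image.mpr ⟨u, Finset.mem_filter.mpr
          ⟨Finset.mem_univ _, hu, Or.inl hne⟩, ?_⟩
        show goD A ℓ hkm hm0 c e (e u) = jm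
        rw [hgoeq, ← hpre]
        simp [preD, hj]
      · exact Finset.mem_image.mpr ⟨u, Finset.mem_filter.mpr
          ⟨Finset.mem_univ _, hu, Or.inr hlt⟩, hgo⟩
    have : (FFD A ℓ hkm hm0 c e x).card ≤ (T.image f).card :=
      Finset.card_le_card hsub2
    omega
  -- key avoidance property
  have havoid : ∀ v : V, c v = none → ∀ u, u ∈ nbrD A ℓ c v →
      (c u ≠ none ∨ e u < e v) → col u ≠ col v := by
    intro v hv u hu hor
    have hx : c (e.symm (e v)) = none := by simpa using hv
    have hcard := hFF_card (e v)
    have hcardlt : (FFD A ℓ hkm hm0 c e (e v)).card < m := by omega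
    have h2 : ∃ jm : Fin m, jm ∉ FFD A ℓ hkm hm0 c e (e v) := by
      by_contra hcon
      push_neg at hcon
      have : (Finset.univ : Finset (Fin m)).card ≤ (FFD A ℓ hkm hm0 c e (e v)).card :=
        Finset.card_le_card (fun jm _ => hcon jm)
      simp at this
      omega
    have hcv : col v = Classical.choose h2 := by
      rw [hcoldef]
      simp only
      rw [goD_eq_new hx, dif_pos h2]
    have hspec := Classical.choose_spec h2
    have hmem : col u ∈ FFD A ℓ hkm hm0 c e (e v) := by
      rw [FFD, Finset.mem_filter]
      refine ⟨Finset.mem_univ _, u, by simpa using hu, ?_⟩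
      by_cases hcu : c u = none
      · have hlt : e u < e v := by
          rcases hor with h | h
          · exact absurd hcu h
          · exact h
        exact Or.inr ⟨hlt, hcu, rfl⟩
      · obtain ⟨j, hj⟩ := Option.ne_none_iff_exists'.mp hcu
        refine Or.inl ⟨hcu, ?_⟩
        rw [hcol_pre u j hj]
        simp [preD, hj]
    intro heq
    rw [heq, hcv] at hmem
    exact hspec hmem
  -- conclude
  refine Nat.sInf_le ⟨col, ?_⟩
  intro v hcyc
  set R : V → V → Prop := fun x y => A x y ∧ col x = col y with hR
  set W : Set V := {u | TransGen R v u ∧ TransGen R u v} with hW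
  have hvW : v ∈ W := ⟨hcyc, hcyc⟩
  set ρ : V → ℕ := fun u => if c u = none then (e u : ℕ) + 1 else 0 with hρ
  obtain ⟨x, hxW, hxmax⟩ := Finset.exists_max_image W.toFinite.toFinset ρ
    ⟨v, W.toFinite.mem_toFinset.mpr hvW⟩
  rw [Set.Finite.mem_toFinset] at hxW
  have hxmax' : ∀ u ∈ W, ρ u ≤ ρ x := fun u hu =>
    hxmax u (W.toFinite.mem_toFinset.mpr hu)
  rcases hcx : c x with _ | j
  · -- x uncoloured: derive a contradiction using a neighbour on x's side
    -- find the side-neighbour y of x inside W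
    have hyex : ∃ y ∈ W, y ∈ nbrD A ℓ c x ∧ col y = col x := by
      unfold nbrD
      split
      · -- in-neighbours: use the predecessor of x on the cycle
        obtain ⟨y, hvy, hyx⟩ := Relation.TransGen.tail'_iff.mp hxW.1
        have hyW : y ∈ W := by
          rcases Relation.reflTransGen_iff_eq_or_transGen.mp hvy with rfl | h
          · exact hvW
          · exact ⟨h, (TransGen.single hyx).trans hxW.2⟩
        exact ⟨y, hyW, hyx.1, hyx.2⟩
      · -- out-neighbours: use the successor of x on the cycle
        obtain ⟨y, hxy, hyv⟩ := Relation.TransGen.head'_iff.mp hxW.2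
        have hyW : y ∈ W := by
          rcases Relation.reflTransGen_iff_eq_or_transGen.mp hyv with rfl | h
          · exact hvW
          · exact ⟨hxW.1.trans (TransGen.single hxy), h⟩
        exact ⟨y, hyW, hxy.1, hxy.2.symm⟩
    obtain ⟨y, hyW, hynbr, hycol⟩ := hyex
    have hyx : y ≠ x := by
      intro h
      subst h
      -- then A y y via membership in nbrD
      revert hynbr
      unfold nbrD
      split
      · exact fun h => hirr y h
      · exact fun h => hirr y h
    have hor : c y ≠ none ∨ e y < e x := by
      by_cases hcy : c y = none
      · right
        have := hxmax' y hyW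
        rw [hρ] at this
        simp only [hcy, hcx, if_true] at this
        have hle : (e y : ℕ) ≤ (e x : ℕ) := by omega
        have hne : (e y : ℕ) ≠ (e x : ℕ) := by
          intro h
          exact hyx (e.injective (Fin.ext h))
        exact Fin.lt_def.mpr (lt_of_le_of_ne hle hne)
      · exact Or.inl hcy
    exact havoid x hcx y hynbr hor hycol
  · -- x precoloured, hence all of W is precoloured: contradiction with hacyc
    have hall : ∀ u ∈ W, ∃ i, c u = some i := by
      intro u hu
      have := hxmax' u hu
      rw [hρ] at this
      simp only [hcx] at this
      by_cases hcu : c u = none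
      · rw [if_pos hcu] at this
        simp at this
      · exact Option.ne_none_iff_exists'.mp hcu
    apply hacyc v
    refine cyc_mono hcyc ?_
    intro a b hva hbv hab
    have haW : a ∈ W := ⟨hva, (TransGen.single hab).trans hbv⟩
    have hbW : b ∈ W := ⟨hva.trans (TransGen.single hab), hbv⟩
    obtain ⟨ja, hja⟩ := hall a haW
    obtain ⟨jb, hjb⟩ := hall b hbW
    have hcab : Fin.castLE hkm ja = Fin.castLE hkm jb := by
      rw [← hcol_pre a ja hja, ← hcol_pre b jb hjb]
      exact hab.2
    have : ja = jb := Fin.castLE_injective hkm hcab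
    exact ⟨hab.1, ja, hja, this ▸ hjb⟩
end

section
/- Let G be a graph obtained from the complete graph K_n by removing a matching of size p. Then G is (n−p)-choosable: for every list assignment giving each vertex at least n−p colours, G has a proper colouring from the lists. -/
/-!
Induction on the matching. If some matched pair `{x, y}` has a colour `a` common to both lists,
colour `x` and `y` by `a`, delete `a` from all other lists and recurse: two vertices, one pair
and at most one colour per list are lost, so the hypothesis `|A| ≤ |L v| + |M|` survives.
Otherwise the lists of matched vertices are disjoint, and Hall's theorem gives distinct colours
for all vertices. Indeed a set `S` of vertices either contains a matched pair, and then its lists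
cover at least `2(|A| - |M|) ≥ |A| ≥ |S|` colours (as `2|M| ≤ |A|`), or it misses a vertex of
every pair, and then `|S| ≤ |A| - |M|` is at most the size of any single list.
-/

open Finset

section

variable {V α : Type*}

structure IsMatchingOn (M : Finset (V × V)) (A : Finset V) : Prop where
  fst_mem : ∀ e ∈ M, e.1 ∈ A
  snd_mem : ∀ e ∈ M, e.2 ∈ A
  fst_ne_snd : ∀ e ∈ M, e.1 ≠ e.2
  pairwise_disjoint : ∀ e ∈ M, ∀ f ∈ M, e ≠ f →
    e.1 ≠ f.1 ∧ e.1 ≠ f.2 ∧ e.2 ≠ f.1 ∧ e.2 ≠ f.2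

def IsListColoringOn (M : Finset (V × V)) (A : Finset V) (L : V → Finset α) (c : V → α) :
    Prop :=
  (∀ v ∈ A, c v ∈ L v) ∧
    ∀ u ∈ A, ∀ v ∈ A, u ≠ v → (u, v) ∉ M → (v, u) ∉ M → c u ≠ c v

namespace IsMatchingOn

variable [DecidableEq V] {M : Finset (V × V)} {A : Finset V}

theorem card_add_card_le (hM : IsMatchingOn M A) {S : Finset V} (hSA : S ⊆ A)
    (hS : ∀ e ∈ M, e.1 ∈ S → e.2 ∉ S) : #S + #M ≤ #A := by
  have hM_le : #M ≤ #(A \ S) := by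
    refine card_le_card_of_injOn (fun e => if e.1 ∈ S then e.2 else e.1) ?_ ?_
    · intro e he
      by_cases h : e.1 ∈ S
      · simpa [h] using ⟨hM.snd_mem e he, hS e he h⟩
      · simpa [h] using hM.fst_mem e he
    · intro e he f hf hef
      by_contra hne
      obtain ⟨h11, h12, h21, h22⟩ := hM.pairwise_disjoint e he f hf hne
      dsimp only at hef
      split_ifs at hef <;> contradiction
  rw [card_sdiff_of_subset hSA] at hM_le
  have := card_le_card hSA
  omega

theorem two_mul_card_le (hM : IsMatchingOn M A) : 2 * #M ≤ #A := by
  have hfst_inj : Set.InjOn Prod.fst (M : Set (V × V)) := by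
    intro e he f hf hef
    by_contra hne
    exact (hM.pairwise_disjoint e he f hf hne).1 hef
  have hfst_sub : M.image Prod.fst ⊆ A := by
    simpa [image_subset_iff] using hM.fst_mem
  have hno_pair : ∀ e ∈ M, e.1 ∈ M.image Prod.fst → e.2 ∉ M.image Prod.fst := by
    intro e he _ he₂
    obtain ⟨f, hf, hfe⟩ := mem_image.1 he₂
    by_cases hef : e = f
    · exact hM.fst_ne_snd e he (by rw [← hfe, hef])
    · exact (hM.pairwise_disjoint e he f hf hef).2.2.1 hfe.symm
  have := hM.card_add_card_le hfst_sub hno_pair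
  rw [card_image_of_injOn hfst_inj] at this
  omega

theorem erase (hM : IsMatchingOn M A) {e : V × V} (he : e ∈ M) :
    IsMatchingOn (M.erase e) (A \ {e.1, e.2}) := by
  have avoid_e : ∀ f ∈ M.erase e, f ∈ M ∧ f.1 ∉ ({e.1, e.2} : Finset V) ∧
      f.2 ∉ ({e.1, e.2} : Finset V) := by
    intro f hf
    have hfM := mem_of_mem_erase hf
    obtain ⟨h11, h12, h21, h22⟩ := hM.pairwise_disjoint f hfM e he (ne_of_mem_erase hf)
    simp [hfM, h11, h12, h21, h22]
  refine ⟨fun f hf => ?_, fun f hf => ?_, fun f hf => ?_, fun f hf g hg => ?_⟩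
  · exact mem_sdiff.2 ⟨hM.fst_mem f (avoid_e f hf).1, (avoid_e f hf).2.1⟩
  · exact mem_sdiff.2 ⟨hM.snd_mem f (avoid_e f hf).1, (avoid_e f hf).2.2⟩
  · exact hM.fst_ne_snd f (avoid_e f hf).1
  · exact hM.pairwise_disjoint f (avoid_e f hf).1 g (avoid_e g hg).1

theorem card_le_card_biUnion [DecidableEq α] (hM : IsMatchingOn M A) {L : V → Finset α}
    (hdisj : ∀ e ∈ M, Disjoint (L e.1) (L e.2)) (hL : ∀ v ∈ A, #A ≤ #(L v) + #M)
    {S : Finset V} (hSA : S ⊆ A) : #S ≤ #(S.biUnion L) := by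
  have hSA_card := card_le_card hSA
  by_cases hpair : ∃ e ∈ M, e.1 ∈ S ∧ e.2 ∈ S
  · obtain ⟨e, he, h1, h2⟩ := hpair
    have hunion := card_le_card
      (union_subset (subset_biUnion_of_mem L h1) (subset_biUnion_of_mem L h2))
    rw [card_union_of_disjoint (hdisj e he)] at hunion
    have := hL _ (hSA h1)
    have := hL _ (hSA h2)
    have := hM.two_mul_card_le
    omega
  · push Not at hpair
    obtain rfl | ⟨v, hv⟩ := S.eq_empty_or_nonempty
    · simp
    have := hM.card_add_card_le hSA hpair
    have := hL v (hSA hv)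
    have := card_le_card (subset_biUnion_of_mem L hv)
    omega

end IsMatchingOn

theorem Finset.exists_injOn_mem_of_forall_card_le_card_biUnion [DecidableEq α] [Nonempty α]
    {A : Finset V} (L : V → Finset α) (hall : ∀ S ⊆ A, #S ≤ #(S.biUnion L)) :
    ∃ c : V → α, (∀ v ∈ A, c v ∈ L v) ∧ Set.InjOn c A := by
  classical
  obtain ⟨f, hf_inj, hfL⟩ :=
    (all_card_le_biUnion_card_iff_exists_injective fun v : A => L v).mp fun s => by
      have key := hall (s.map (Function.Embedding.subtype _)) fun x hx => by
        obtain ⟨y, -, rfl⟩ := mem_map.1 hx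
        exact y.2
      rwa [card_map, map_eq_image, image_biUnion] at key
  refine ⟨fun x => if hx : x ∈ A then f ⟨x, hx⟩ else Classical.arbitrary α, fun v hv => ?_,
    fun u hu v hv huv => ?_⟩
  · simpa [hv] using hfL ⟨v, hv⟩
  · simp only [mem_coe] at hu hv
    exact congrArg Subtype.val (hf_inj (by simpa [hu, hv] using huv))

theorem IsListColoringOn.extend [DecidableEq V] [DecidableEq α] {M : Finset (V × V)}
    {A : Finset V} {L : V → Finset α} {c : V → α} {e : V × V} (he : e ∈ M) {a : α}
    (ha₁ : a ∈ L e.1) (ha₂ : a ∈ L e.2)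
    (hc : IsListColoringOn (M.erase e) (A \ {e.1, e.2}) (fun v => (L v).erase a) c) :
    IsListColoringOn M A L (fun v => if v ∈ ({e.1, e.2} : Finset V) then a else c v) := by
  obtain ⟨hcL, hc_ne⟩ := hc
  have hc_ne_a : ∀ v ∈ A, v ∉ ({e.1, e.2} : Finset V) → c v ≠ a := fun v hv hve =>
    ne_of_mem_erase (hcL v (mem_sdiff.2 ⟨hv, hve⟩))
  refine ⟨fun v hv => ?_, fun u hu v hv huv huvM hvuM => ?_⟩ <;> dsimp only
  · split_ifs with hve
    · rcases mem_insert.1 hve with rfl | hve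
      · exact ha₁
      · rwa [mem_singleton.1 hve]
    · exact mem_of_mem_erase (hcL v (mem_sdiff.2 ⟨hv, hve⟩))
  · split_ifs with hue hve hve
    · exfalso
      simp only [mem_insert, mem_singleton] at hue hve
      rcases hue with rfl | rfl <;> rcases hve with rfl | rfl <;> simp_all
    · exact (hc_ne_a v hv hve).symm
    · exact hc_ne_a u hu hue
    · exact hc_ne u (mem_sdiff.2 ⟨hu, hue⟩) v (mem_sdiff.2 ⟨hv, hve⟩) huv
        (fun h => huvM (mem_of_mem_erase h)) (fun h => hvuM (mem_of_mem_erase h))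

theorem IsMatchingOn.exists_isListColoringOn [DecidableEq V] [DecidableEq α] [Nonempty α]
    {M : Finset (V × V)} {A : Finset V} (hM : IsMatchingOn M A) {L : V → Finset α}
    (hL : ∀ v ∈ A, #A ≤ #(L v) + #M) : ∃ c, IsListColoringOn M A L c := by
  induction M using Finset.strongInduction generalizing A L with
  | _ M ih =>
    by_cases hcommon : ∃ e ∈ M, ∃ a, a ∈ L e.1 ∧ a ∈ L e.2
    · obtain ⟨e, he, a, ha₁, ha₂⟩ := hcommon
      have hpair_card : #(A \ {e.1, e.2}) = #A - 2 := by
        rw [card_sdiff_of_subset (by simp [insert_subset_iff, hM.fst_mem e he, hM.snd_mem e he]),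
          card_pair (hM.fst_ne_snd e he)]
      obtain ⟨c, hc⟩ := ih _ (erase_ssubset he) (hM.erase he) (L := fun v => (L v).erase a)
        fun v hv => by
          have := hL v (mem_sdiff.1 hv).1
          have := pred_card_le_card_erase (s := L v) (a := a)
          have := card_pos.2 ⟨e, he⟩
          rw [hpair_card, card_erase_of_mem he]
          omega
      exact ⟨_, hc.extend he ha₁ ha₂⟩
    · push Not at hcommon
      have hdisj : ∀ e ∈ M, Disjoint (L e.1) (L e.2) := fun e he =>
        disjoint_left.2 (hcommon e he)
      obtain ⟨c, hcL, hc_inj⟩ := exists_injOn_mem_of_forall_card_le_card_biUnion L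
        fun S hSA => hM.card_le_card_biUnion hdisj hL hSA
      exact ⟨c, hcL, fun u hu v hv huv _ _ => hc_inj.ne hu hv huv⟩

end

theorem stmt_6 {V : Type*} [Fintype V] [DecidableEq V] (n p : ℕ)
    (hn : Fintype.card V = n)
    (M : Finset (V × V)) (hp : M.card = p)
    (hM1 : ∀ e ∈ M, e.1 ≠ e.2)
    (hM2 : ∀ e ∈ M, ∀ f ∈ M, e ≠ f →
      e.1 ≠ f.1 ∧ e.1 ≠ f.2 ∧ e.2 ≠ f.1 ∧ e.2 ≠ f.2)
    (G : SimpleGraph V)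
    (hG : ∀ u v, G.Adj u v ↔ u ≠ v ∧ (u, v) ∉ M ∧ (v, u) ∉ M)
    (L : V → Finset ℕ) (hL : ∀ v, n - p ≤ (L v).card) :
    ∃ c : V → ℕ, (∀ v, c v ∈ L v) ∧ ∀ u v, G.Adj u v → c u ≠ c v := by
  have hM : IsMatchingOn M univ :=
    ⟨fun _ _ => mem_univ _, fun _ _ => mem_univ _, hM1, hM2⟩
  obtain ⟨c, hcL, hc⟩ := hM.exists_isListColoringOn (L := L) fun v _ => by
    rw [card_univ, hn, hp]
    have := hL v
    omega
  refine ⟨c, fun v => hcL v (mem_univ v), fun u v huv => ?_⟩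
  obtain ⟨hne, huvM, hvuM⟩ := (hG u v).mp huv
  exact hc u (mem_univ u) v (mem_univ v) hne huvM hvuM
end

section
/- Let D be a digraph obtained from the complete digraph on n vertices by removing a matching of size p (a set of p pairwise disjoint arcs). Then D is (n−p)-dichoosable. -/
/-!
Every list has at least `n - p` colours. If the two ends of some removed arc share a colour `c`,
give both ends colour `c`, delete them, delete `c` from all other lists and recurse: the new
instance has `n - 2` vertices, a matching of size `p - 1` and lists of size `n - p - 1`.
Otherwise the lists of matched ends are disjoint, and Hall's theorem gives distinct colours to all
vertices: a set of more than `n - p` vertices contains both ends of a removed arc, whose lists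
together already have `2 (n - p) ≥ n` colours.
Either way each colour class is a single vertex or the two ends of a removed arc, so it spans at
most one arc of `D`, and is acyclic.
-/

open Relation Finset

section

variable {V β : Type*}

theorem Relation.TransGen.rel_of_not_rel_rel {r : V → V → Prop} (h : ∀ x y z, r x y → ¬ r y z)
    {a b : V} (hab : TransGen r a b) : r a b := by
  induction hab with
  | single hab => exact hab
  | tail _ hbc ih => exact absurd hbc (h _ _ _ ih)

structure IsArcMatching (M : Finset (V × V)) : Prop where
  fst_ne_snd : ∀ e ∈ M, e.1 ≠ e.2
  disjoint : ∀ e ∈ M, ∀ f ∈ M, e ≠ f → e.1 ≠ f.1 ∧ e.1 ≠ f.2 ∧ e.2 ≠ f.1 ∧ e.2 ≠ f.2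

namespace IsArcMatching

variable {M : Finset (V × V)} (hM : IsArcMatching M)
include hM

theorem mono {M' : Finset (V × V)} (h : M' ⊆ M) : IsArcMatching M' :=
  ⟨fun e he => hM.fst_ne_snd e (h he), fun e he f hf => hM.disjoint e (h he) f (h hf)⟩

theorem fst_ne_snd_of_mem {e f : V × V} (he : e ∈ M) (hf : f ∈ M) : e.1 ≠ f.2 := by
  by_cases hef : e = f
  · exact hef ▸ hM.fst_ne_snd e he
  · exact (hM.disjoint e he f hf hef).2.1

theorem fst_injOn : Set.InjOn Prod.fst (M : Set (V × V)) :=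
  fun e he f hf h => by_contra fun hef => (hM.disjoint e he f hf hef).1 h

theorem snd_injOn : Set.InjOn Prod.snd (M : Set (V × V)) :=
  fun e he f hf h => by_contra fun hef => (hM.disjoint e he f hf hef).2.2.2 h

theorem card_le_card_sdiff [DecidableEq V] {S s : Finset V}
    (hMS : ∀ e ∈ M, e.1 ∈ S ∧ e.2 ∈ S) (hs : ∀ e ∈ M, e.1 ∈ s → e.2 ∉ s) :
    #M ≤ #(S \ s) := by
  refine card_le_card_of_injOn (fun e => if e.1 ∈ s then e.2 else e.1) (fun e he => ?_) ?_
  · by_cases h1 : e.1 ∈ s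
    · simpa [h1] using ⟨(hMS e he).2, hs e he h1⟩
    · simpa [h1] using (hMS e he).1
  · intro e he f hf hef
    by_cases h1 : e.1 ∈ s <;> by_cases h2 : f.1 ∈ s <;> simp only [h1, h2, if_true, if_false] at hef
    · exact hM.snd_injOn he hf hef
    · exact absurd hef.symm (hM.fst_ne_snd_of_mem hf he)
    · exact absurd hef (hM.fst_ne_snd_of_mem he hf)
    · exact hM.fst_injOn he hf hef

theorem two_mul_card_le [DecidableEq V] {S : Finset V} (hMS : ∀ e ∈ M, e.1 ∈ S ∧ e.2 ∈ S) :
    2 * #M ≤ #S := by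
  have hsub : M.image Prod.fst ⊆ S := by
    simpa [subset_iff] using fun e he => (hMS e he).1
  have hle := hM.card_le_card_sdiff hMS (s := M.image Prod.fst) fun e he _ => by
    simpa using fun x hx => hM.fst_ne_snd_of_mem hx he rfl
  rw [card_sdiff_of_subset hsub, card_image_of_injOn hM.fst_injOn] at hle
  have := card_le_card hsub
  omega

theorem card_le_card_biUnion [DecidableEq V] [DecidableEq β] {S t : Finset V}
    {L : V → Finset β} (hMS : ∀ e ∈ M, e.1 ∈ S ∧ e.2 ∈ S) (hL : ∀ v ∈ S, #S - #M ≤ #(L v))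
    (hdisj : ∀ e ∈ M, Disjoint (L e.1) (L e.2)) (ht : t ⊆ S) : #t ≤ #(t.biUnion L) := by
  have htS := card_le_card ht
  by_cases hsmall : #t ≤ #S - #M
  · obtain rfl | ⟨v, hv⟩ := t.eq_empty_or_nonempty
    · simp
    · exact hsmall.trans ((hL v (ht hv)).trans (card_le_card (subset_biUnion_of_mem L hv)))
  -- a set of more than `#S - #M` vertices contains both ends of an arc of `M`
  obtain ⟨e, he, he1, he2⟩ : ∃ e ∈ M, e.1 ∈ t ∧ e.2 ∈ t := by
    by_contra! h
    have := hM.card_le_card_sdiff hMS h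
    rw [card_sdiff_of_subset ht] at this
    omega
  have hunion : L e.1 ∪ L e.2 ⊆ t.biUnion L :=
    union_subset (subset_biUnion_of_mem L he1) (subset_biUnion_of_mem L he2)
  have := card_le_card hunion
  rw [card_union_of_disjoint (hdisj e he)] at this
  have := hL e.1 (hMS e he).1
  have := hL e.2 (hMS e he).2
  have := hM.two_mul_card_le hMS
  omega

theorem exists_injOn [DecidableEq V] [DecidableEq β] [Nonempty β] {S : Finset V} {L : V → Finset β}
    (hMS : ∀ e ∈ M, e.1 ∈ S ∧ e.2 ∈ S) (hL : ∀ v ∈ S, #S - #M ≤ #(L v))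
    (hdisj : ∀ e ∈ M, Disjoint (L e.1) (L e.2)) :
    ∃ α : V → β, (∀ v ∈ S, α v ∈ L v) ∧ Set.InjOn α S := by
  obtain ⟨f, hf, hfL⟩ := (all_card_le_biUnion_card_iff_exists_injective fun v : S => L v).1
    fun s => by
      simpa [← image_biUnion, card_image_of_injective _ Subtype.val_injective] using
        hM.card_le_card_biUnion hMS hL hdisj (t := s.image Subtype.val) (fun v hv => by
          obtain ⟨w, -, rfl⟩ := mem_image.1 hv
          exact w.2)
  refine ⟨fun v => if hv : v ∈ S then f ⟨v, hv⟩ else Classical.arbitrary β, ?_, ?_⟩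
  · intro v hv
    simpa [hv] using hfL ⟨v, hv⟩
  · intro u hu v hv h
    rw [mem_coe] at hu hv
    simp only [dif_pos hu, dif_pos hv] at h
    simpa using hf h

end IsArcMatching

def InjOnModMatching (α : V → β) (S : Finset V) (M : Finset (V × V)) : Prop :=
  ∀ u ∈ S, ∀ v ∈ S, α u = α v → u = v ∨ (u, v) ∈ M ∨ (v, u) ∈ M

theorem Set.InjOn.injOnModMatching {α : V → β} {S : Finset V} (h : Set.InjOn α S)
    (M : Finset (V × V)) : InjOnModMatching α S M :=
  fun _ hu _ hv huv => Or.inl (h hu hv huv)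

theorem InjOnModMatching.insert_pair [DecidableEq V] {α : V → β} {S : Finset V}
    {M : Finset (V × V)} {e : V × V} {c : β}
    (hα : InjOnModMatching α (S \ {e.1, e.2}) (M.erase e)) (hαc : ∀ v ∈ S \ {e.1, e.2}, α v ≠ c)
    (he : e ∈ M) : InjOnModMatching (fun v => if v = e.1 ∨ v = e.2 then c else α v) S M := by
  have hmem : ∀ v ∈ S, ¬(v = e.1 ∨ v = e.2) → v ∈ S \ {e.1, e.2} := fun v hv h => by
    simpa [hv] using h
  intro u hu v hv huv
  by_cases hu' : u = e.1 ∨ u = e.2 <;> by_cases hv' : v = e.1 ∨ v = e.2 <;>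
    simp only [hu', hv', if_true, if_false] at huv
  · rcases hu' with rfl | rfl <;> rcases hv' with rfl | rfl <;> simp [he]
  · exact absurd huv.symm (hαc v (hmem v hv hv'))
  · exact absurd huv (hαc u (hmem u hu hu'))
  · obtain h | h | h := hα u (hmem u hu hu') v (hmem v hv hv') huv
    exacts [Or.inl h, Or.inr (Or.inl (mem_of_mem_erase h)), Or.inr (Or.inr (mem_of_mem_erase h))]

theorem IsArcMatching.exists_injOnModMatching [DecidableEq V] [DecidableEq β] [Nonempty β]
    {M : Finset (V × V)} (hM : IsArcMatching M) {S : Finset V} {L : V → Finset β}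
    (hMS : ∀ e ∈ M, e.1 ∈ S ∧ e.2 ∈ S) (hL : ∀ v ∈ S, #S - #M ≤ #(L v)) :
    ∃ α : V → β, (∀ v ∈ S, α v ∈ L v) ∧ InjOnModMatching α S M := by
  induction M using Finset.strongInduction generalizing S L with
  | H M ih =>
  by_cases hcommon : ∃ e ∈ M, ∃ c, c ∈ L e.1 ∧ c ∈ L e.2
  · obtain ⟨e, he, c, hc1, hc2⟩ := hcommon
    have hMS' : ∀ f ∈ M.erase e, f.1 ∈ S \ {e.1, e.2} ∧ f.2 ∈ S \ {e.1, e.2} := by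
      intro f hf
      obtain ⟨hfe, hf⟩ := mem_erase.1 hf
      obtain ⟨h11, h12, h21, h22⟩ := hM.disjoint f hf e he hfe
      simp [hMS f hf, h11, h12, h21, h22]
    have hL' : ∀ v ∈ S \ {e.1, e.2}, #(S \ {e.1, e.2}) - #(M.erase e) ≤ #((L v).erase c) := by
      intro v hv
      have hpair : {e.1, e.2} ⊆ S := by simp [insert_subset_iff, hMS e he]
      have hS : #(S \ {e.1, e.2}) + 2 = #S := by
        rw [← card_pair (hM.fst_ne_snd e he)]
        exact card_sdiff_add_card_eq_card hpair
      have := hL v (mem_sdiff.1 hv).1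
      have := card_erase_add_one he
      have := pred_card_le_card_erase (s := L v) (a := c)
      omega
    obtain ⟨α, hαL, hα⟩ := ih _ (erase_ssubset he) (hM.mono (erase_subset e M)) hMS' hL'
    refine ⟨fun v => if v = e.1 ∨ v = e.2 then c else α v, fun v hv => ?_,
      hα.insert_pair (fun v hv => ne_of_mem_erase (hαL v hv)) he⟩
    by_cases hv' : v = e.1 ∨ v = e.2
    · rcases hv' with rfl | rfl <;> simpa
    · simpa [hv'] using mem_of_mem_erase (hαL v (by simpa [hv] using hv'))
  · obtain ⟨α, hαL, hinj⟩ := hM.exists_injOn hMS hL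
      fun e he => disjoint_left.2 fun c h1 h2 => hcommon ⟨e, he, c, h1, h2⟩
    exact ⟨α, hαL, hinj.injOnModMatching M⟩

end

theorem stmt_7 {V : Type*} [Fintype V] [DecidableEq V] (n p : ℕ)
    (hn : Fintype.card V = n)
    (M : Finset (V × V)) (hp : M.card = p)
    (hM1 : ∀ e ∈ M, e.1 ≠ e.2)
    (hM2 : ∀ e ∈ M, ∀ f ∈ M, e ≠ f →
      e.1 ≠ f.1 ∧ e.1 ≠ f.2 ∧ e.2 ≠ f.1 ∧ e.2 ≠ f.2)
    (A : V → V → Prop) (hA : ∀ u v, A u v ↔ u ≠ v ∧ (u, v) ∉ M)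
    (L : V → Finset ℕ) (hL : ∀ v, n - p ≤ (L v).card) :
    ∃ α : V → ℕ, (∀ v, α v ∈ L v) ∧
      ∀ v, ¬ TransGen (fun x y => A x y ∧ α x = α y) v v := by
  have hM : IsArcMatching M := ⟨hM1, hM2⟩
  obtain ⟨α, hαL, hα⟩ := hM.exists_injOnModMatching (S := univ) (L := L) (by simp)
    fun v _ => by rw [card_univ, hn, hp]; exact hL v
  refine ⟨α, fun v => hαL v (mem_univ v), fun v hv => ?_⟩
  -- a monochromatic arc `x → y` of `D` is the reverse of an arc of `M`, and these never chain
  have hrev : ∀ x y, A x y ∧ α x = α y → (y, x) ∈ M := by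
    rintro x y ⟨hxy, hαxy⟩
    obtain ⟨hne, hnotM⟩ := (hA x y).1 hxy
    obtain h | h | h := hα x (mem_univ x) y (mem_univ y) hαxy
    exacts [absurd h hne, absurd h hnotM, h]
  have hvv := (TransGen.mono hrev v v hv).rel_of_not_rel_rel fun x y z hxy hyz =>
    hM.fst_ne_snd_of_mem hxy hyz rfl
  exact hM.fst_ne_snd _ hvv rfl
end

section
/- Let G be a graph and 𝒞 a collection of maximum cliques of G. Then |⋂𝒞| + |⋃𝒞| ≥ 2ω(G), where ω(G) is the clique number of G. -/
theorem stmt_8 {V : Type*} [Fintype V] [DecidableEq V] (G : SimpleGraph V)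
    (ω : ℕ) (hω : ∀ S : Finset V, G.IsClique (S : Set V) → S.card ≤ ω)
    (𝒞 : Finset (Finset V)) (hne : 𝒞.Nonempty)
    (hC : ∀ C ∈ 𝒞, G.IsClique (C : Set V) ∧ C.card = ω) :
    2 * ω ≤ (𝒞.inf id).card + (𝒞.sup id).card := by
  classical
  revert hC
  induction hne using Finset.Nonempty.cons_induction with
  | singleton a =>
      intro hC
      obtain ⟨_, hca⟩ := hC a (Finset.mem_singleton_self a)
      simp [hca]; omega
  | cons a s ha hs ih =>
      intro hC
      have hCa := hC a (Finset.mem_cons_self a s)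
      have hCs : ∀ D ∈ s, G.IsClique (D : Set V) ∧ D.card = ω :=
        fun D hD => hC D (Finset.mem_cons.mpr (Or.inr hD))
      have IH := ih hCs
      set I₀ := s.inf id with hI₀
      set U₀ := s.sup id with hU₀
      obtain ⟨D₀, hD₀⟩ := hs
      have hIsub : ∀ D ∈ s, I₀ ⊆ D := fun D hD => by simpa using (Finset.inf_le hD : s.inf id ≤ id D)
      -- Key: I₀ ∪ (a ∩ U₀) is a clique
      set K : Finset V := I₀ ∪ (a ∩ U₀) with hKdef
      have hadj : ∀ x ∈ K, ∀ y ∈ K, x ≠ y → G.Adj x y := by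
        intro x hx y hy hxy
        rw [hKdef, Finset.mem_union] at hx hy
        rcases hx with hx | hx
        · rcases hy with hy | hy
          · exact (hCs D₀ hD₀).1 (Finset.mem_coe.mpr (hIsub D₀ hD₀ hx))
              (Finset.mem_coe.mpr (hIsub D₀ hD₀ hy)) hxy
          · have hyU : y ∈ U₀ := (Finset.mem_inter.mp hy).2
            obtain ⟨D, hD, hyD⟩ := Finset.mem_sup.mp hyU
            exact (hCs D hD).1 (Finset.mem_coe.mpr (hIsub D hD hx))
              (Finset.mem_coe.mpr hyD) hxy
        · rcases hy with hy | hy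
          · have hxU : x ∈ U₀ := (Finset.mem_inter.mp hx).2
            obtain ⟨D, hD, hxD⟩ := Finset.mem_sup.mp hxU
            exact (hCs D hD).1 (Finset.mem_coe.mpr hxD)
              (Finset.mem_coe.mpr (hIsub D hD hy)) hxy
          · exact hCa.1 (Finset.mem_coe.mpr (Finset.mem_inter.mp hx).1)
              (Finset.mem_coe.mpr (Finset.mem_inter.mp hy).1) hxy
      have hK : G.IsClique (K : Set V) := by
        intro x hx y hy hxy
        exact hadj x (Finset.mem_coe.mp hx) y (Finset.mem_coe.mp hy) hxy
      have hKcard : K.card ≤ ω := hω K hK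
      have hdisj : Disjoint (I₀ \ a) (a ∩ U₀) := by
        rw [Finset.disjoint_left]
        intro x hx hx'
        exact (Finset.mem_sdiff.mp hx).2 (Finset.mem_inter.mp hx').1
      have hsub : (I₀ \ a) ∪ (a ∩ U₀) ⊆ K := by
        rw [hKdef]
        exact Finset.union_subset_union Finset.sdiff_subset (le_refl _)
      have h1 : (I₀ \ a).card + (a ∩ U₀).card ≤ K.card := by
        rw [← Finset.card_union_of_disjoint hdisj]
        exact Finset.card_le_card hsub
      have h2 : (I₀ ∩ a).card + (I₀ \ a).card = I₀.card :=
        Finset.card_inter_add_card_sdiff I₀ a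
      have h3 : (a ∩ U₀).card + (a \ U₀).card = a.card :=
        Finset.card_inter_add_card_sdiff a U₀
      have h4 : (a \ U₀).card + U₀.card = (a ∪ U₀).card :=
        Finset.card_sdiff_add_card a U₀
      have hacard : a.card = ω := hCa.2
      rw [Finset.inf_cons, Finset.sup_cons]
      simp only [id_eq]
      have hic : (a ⊓ I₀).card = (I₀ ∩ a).card := by rw [Finset.inter_comm]; rfl
      have huc : (a ⊔ U₀).card = (a ∪ U₀).card := rfl
      rw [hic, huc]
      omega
end

section
/- Let D be a B-sparse digraph with maximum degree Δ_max(D) = Δ. Then there exists a B-sparse Δ-diregular digraph H (every vertex of H has in-degree and out-degree exactly Δ) such that χ⃗(D) ≤ χ⃗(H). -/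
open Relation

/-- Number of arcs inside the induced subdigraph on the out-neighbourhood of `v`. -/
noncomputable def mOut {V : Type*} (A : V → V → Prop) (v : V) : ℕ :=
  {q : V × V | A v q.1 ∧ A v q.2 ∧ A q.1 q.2}.ncard

/-- Number of arcs inside the induced subdigraph on the in-neighbourhood of `v`. -/
noncomputable def mIn {V : Type*} (A : V → V → Prop) (v : V) : ℕ :=
  {q : V × V | A q.1 v ∧ A q.2 v ∧ A q.1 q.2}.ncard

namespace S10

lemma outDeg_flip {V : Type*} (A : V → V → Prop) (v : V) : outDeg (flip A) v = inDeg A v := rfl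
lemma inDeg_flip {V : Type*} (A : V → V → Prop) (v : V) : inDeg (flip A) v = outDeg A v := rfl

lemma ncard_preimage_bij {β γ : Type*} {f : β → γ} (hf : Function.Bijective f) (S : Set γ) :
    (f ⁻¹' S).ncard = S.ncard := by
  conv_rhs => rw [← Set.image_preimage_eq S hf.surjective]
  rw [Set.ncard_image_of_injective _ hf.injective]

def reg {α : Type*} (R : α → α → Prop) (Δ : ℕ) (p q : α × Bool × ZMod (Δ+1)) : Prop :=
  (p.2.1 = q.2.1 ∧ p.2.2 = q.2.2 ∧ (if p.2.1 = true then R q.1 p.1 else R p.1 q.1)) ∨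
  (p.1 = q.1 ∧ p.2.1 = false ∧ q.2.1 = true ∧ ∃ t : ℕ, t < Δ - outDeg R p.1 ∧ q.2.2 = p.2.2 + t) ∨
  (p.1 = q.1 ∧ p.2.1 = true ∧ q.2.1 = false ∧ ∃ t : ℕ, t < Δ - inDeg R p.1 ∧ q.2.2 = p.2.2 + t)

def sf {α : Type*} {m : ℕ} (p : α × Bool × ZMod m) : α × Bool × ZMod m := (p.1, !p.2.1, p.2.2)
def rf {α : Type*} {m : ℕ} (p : α × Bool × ZMod m) : α × Bool × ZMod m := (p.1, !p.2.1, -p.2.2)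

lemma sf_invol {α : Type*} {m : ℕ} : Function.Involutive (sf : α × Bool × ZMod m → _) := by
  intro ⟨v, b, i⟩; simp [sf]
lemma rf_invol {α : Type*} {m : ℕ} : Function.Involutive (rf : α × Bool × ZMod m → _) := by
  intro ⟨v, b, i⟩; simp [rf]

lemma reg_sf {α : Type*} (R : α → α → Prop) (Δ : ℕ) (p q : α × Bool × ZMod (Δ+1)) :
    reg R Δ p q ↔ reg (flip R) Δ (sf p) (sf q) := by
  obtain ⟨u, b, i⟩ := p; obtain ⟨v, c, j⟩ := q
  cases b <;> cases c <;>
    simp [reg, sf, Function.flip_def, outDeg_flip, inDeg_flip] <;> tauto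

lemma reg_rf {α : Type*} (R : α → α → Prop) (Δ : ℕ) (p q : α × Bool × ZMod (Δ+1)) :
    reg R Δ q p ↔ reg R Δ (rf p) (rf q) := by
  obtain ⟨u, b, i⟩ := p; obtain ⟨v, c, j⟩ := q
  cases b <;> cases c <;> simp only [reg, rf] <;> simp <;>
    first
    | exact fun _ => eq_comm
    | (constructor
       · rintro ⟨rfl, t, ht, h⟩
         exact ⟨rfl, t, ht, by linear_combination h⟩
       · rintro ⟨rfl, t, ht, h⟩
         exact ⟨rfl, t, ht, by linear_combination h⟩)

lemma reg_false_iff {α : Type*} (R : α → α → Prop) (Δ : ℕ) (v u : α) (i j : ZMod (Δ+1)) (c : Bool) :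
    reg R Δ (v, false, i) (u, c, j) ↔
      (c = false ∧ j = i ∧ R v u) ∨
      (c = true ∧ u = v ∧ ∃ t : ℕ, t < Δ - outDeg R v ∧ j = i + t) := by
  simp only [reg]
  simp [eq_comm, and_comm, and_assoc, and_left_comm]

lemma reg_true_iff {α : Type*} (R : α → α → Prop) (Δ : ℕ) (v u : α) (i j : ZMod (Δ+1)) (c : Bool) :
    reg R Δ (v, true, i) (u, c, j) ↔
      (c = true ∧ j = i ∧ R u v) ∨
      (c = false ∧ u = v ∧ ∃ t : ℕ, t < Δ - inDeg R v ∧ j = i + t) := by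
  simp only [reg]
  simp [eq_comm, and_comm, and_assoc, and_left_comm]

lemma castinj {Δ : ℕ} {s t : ℕ} (hs : s < Δ + 1) (ht : t < Δ + 1)
    (h : (s : ZMod (Δ+1)) = t) : s = t := by
  have := congrArg ZMod.val h
  rwa [ZMod.val_natCast_of_lt hs, ZMod.val_natCast_of_lt ht] at this

lemma shiftinj {Δ : ℕ} {r : ℕ} (hr : r ≤ Δ) (i : ZMod (Δ+1)) :
    Function.Injective (fun t : Fin r => i + ((t : ℕ) : ZMod (Δ+1))) := by
  intro s t h
  simp only [add_right_inj] at h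
  have hs : (s : ℕ) < Δ + 1 := by omega
  have ht : (t : ℕ) < Δ + 1 := by omega
  exact Fin.ext (castinj hs ht h)

lemma reg_irrefl {α : Type*} (R : α → α → Prop) (hR : Irreflexive R) (Δ : ℕ) :
    Irreflexive (reg R Δ) := by
  rintro ⟨v, b, i⟩ (⟨-, -, h⟩ | ⟨-, h1, h2, -⟩ | ⟨-, h1, h2, -⟩)
  · cases b <;> exact hR v (by simpa using h)
  · simp_all
  · simp_all

lemma outDeg_reg_false {α : Type*} [Fintype α] (R : α → α → Prop) (Δ : ℕ) (v : α)
    (hdo : outDeg R v ≤ Δ) (i : ZMod (Δ+1)) :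
    outDeg (reg R Δ) (v, false, i) = Δ := by
  have hset : {w | reg R Δ (v, false, i) w} =
      ((fun u => (u, false, i)) '' {u | R v u}) ∪
      ((fun t : Fin (Δ - outDeg R v) => (v, true, i + ((t : ℕ) : ZMod (Δ+1)))) '' Set.univ) := by
    ext ⟨u, c, j⟩
    rw [Set.mem_setOf_eq, reg_false_iff]
    constructor
    · rintro (⟨rfl, rfl, hR⟩ | ⟨rfl, rfl, t, ht, rfl⟩)
      · exact Or.inl ⟨u, hR, rfl⟩
      · exact Or.inr ⟨⟨t, ht⟩, Set.mem_univ _, rfl⟩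
    · rintro (⟨a, ha, heq⟩ | ⟨t, -, heq⟩)
      · simp only [Prod.mk.injEq] at heq
        obtain ⟨rfl, rfl, rfl⟩ := heq
        exact Or.inl ⟨rfl, rfl, ha⟩
      · simp only [Prod.mk.injEq] at heq
        obtain ⟨rfl, rfl, rfl⟩ := heq
        exact Or.inr ⟨rfl, rfl, (t : ℕ), t.2, rfl⟩
  rw [outDeg, hset, Set.ncard_union_eq ?dis (Set.toFinite _) (Set.toFinite _),
    Set.ncard_image_of_injective _ (fun a b h => by simpa using congrArg Prod.fst h),
    Set.ncard_image_of_injective _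
      (fun a b h => shiftinj (Nat.sub_le _ _) i (congrArg (fun p => p.2.2) h)), Set.ncard_univ,
    Nat.card_eq_fintype_card, Fintype.card_fin]
  · exact Nat.add_sub_cancel' hdo
  case dis =>
    rw [Set.disjoint_left]
    rintro w ⟨a, -, rfl⟩ ⟨t, -, h⟩
    exact absurd (congrArg (fun p => p.2.1) h) (by simp)

lemma mOut_reg_false {α : Type*} [Fintype α] (R : α → α → Prop) (hR : Irreflexive R) (Δ : ℕ)
    (v : α) (i : ZMod (Δ+1)) :
    mOut (reg R Δ) (v, false, i) = mOut R v := by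
  have hset : {q : (α × Bool × ZMod (Δ+1)) × (α × Bool × ZMod (Δ+1)) |
        reg R Δ (v, false, i) q.1 ∧ reg R Δ (v, false, i) q.2 ∧ reg R Δ q.1 q.2} =
      (fun p : α × α => ((p.1, false, i), (p.2, false, i))) ''
        {p : α × α | R v p.1 ∧ R v p.2 ∧ R p.1 p.2} := by
    ext ⟨⟨u₁, c₁, j₁⟩, ⟨u₂, c₂, j₂⟩⟩
    simp only [Set.mem_setOf_eq, Set.mem_image]
    constructor
    · rintro ⟨h1, h2, h12⟩
      rw [reg_false_iff] at h1 h2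
      rcases h1 with ⟨rfl, rfl, hv1⟩ | ⟨rfl, rfl, t1, ht1, rfl⟩
      · rcases h2 with ⟨rfl, rfl, hv2⟩ | ⟨rfl, rfl, t2, ht2, rfl⟩
        · rw [reg_false_iff] at h12
          rcases h12 with ⟨-, -, h⟩ | ⟨h, -⟩
          · exact ⟨(u₁, u₂), ⟨hv1, hv2, h⟩, rfl⟩
          · exact Bool.noConfusion h
        · rw [reg_false_iff] at h12
          rcases h12 with ⟨h, -⟩ | ⟨-, rfl, -⟩
          · exact Bool.noConfusion h
          · exact absurd hv1 (hR _)
      · rw [reg_true_iff] at h12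
        rcases h12 with ⟨rfl, -, h⟩ | ⟨rfl, rfl, -⟩
        · rcases h2 with ⟨h', -⟩ | ⟨-, rfl, -⟩
          · exact Bool.noConfusion h'
          · exact absurd h (hR _)
        · rcases h2 with ⟨-, -, h'⟩ | ⟨h', -⟩
          · exact absurd h' (hR _)
          · exact Bool.noConfusion h'
    · rintro ⟨⟨a, b⟩, ⟨ha, hb, hab⟩, heq⟩
      simp only [Prod.mk.injEq] at heq
      obtain ⟨⟨rfl, rfl, rfl⟩, rfl, rfl, rfl⟩ := heq
      exact ⟨(reg_false_iff ..).mpr (Or.inl ⟨rfl, rfl, ha⟩),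
        (reg_false_iff ..).mpr (Or.inl ⟨rfl, rfl, hb⟩),
        (reg_false_iff ..).mpr (Or.inl ⟨rfl, rfl, hab⟩)⟩
  rw [mOut, hset, Set.ncard_image_of_injective, mOut]
  intro p q h
  simp only [Prod.mk.injEq] at h
  exact Prod.ext h.1.1 h.2.1

lemma mOut_flip {α : Type*} (R : α → α → Prop) (v : α) : mOut (flip R) v = mIn R v := by
  have hset : {q : α × α | flip R v q.1 ∧ flip R v q.2 ∧ flip R q.1 q.2} =
      Prod.swap ⁻¹' {q : α × α | R q.1 v ∧ R q.2 v ∧ R q.1 q.2} := by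
    ext ⟨a, b⟩
    simp [Function.flip_def]
    tauto
  rw [mOut, hset, ncard_preimage_bij Prod.swap_bijective, mIn]

lemma outDeg_reg {α : Type*} [Fintype α] (R : α → α → Prop) (Δ : ℕ)
    (hd : ∀ v, outDeg R v ≤ Δ ∧ inDeg R v ≤ Δ) (w : α × Bool × ZMod (Δ+1)) :
    outDeg (reg R Δ) w = Δ := by
  obtain ⟨v, b, i⟩ := w
  cases b
  · exact outDeg_reg_false R Δ v (hd v).1 i
  · have hpre : {w | reg R Δ (v, true, i) w} =
        sf ⁻¹' {w | reg (flip R) Δ (v, false, i) w} := by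
      ext w
      exact reg_sf R Δ (v, true, i) w
    rw [outDeg, hpre, ncard_preimage_bij sf_invol.bijective]
    exact outDeg_reg_false (flip R) Δ v (hd v).2 i

lemma inDeg_reg {α : Type*} [Fintype α] (R : α → α → Prop) (Δ : ℕ)
    (hd : ∀ v, outDeg R v ≤ Δ ∧ inDeg R v ≤ Δ) (w : α × Bool × ZMod (Δ+1)) :
    inDeg (reg R Δ) w = Δ := by
  have hpre : {p | reg R Δ p w} = rf ⁻¹' {p | reg R Δ (rf w) p} := by
    ext p
    exact reg_rf R Δ w p
  rw [inDeg, hpre, ncard_preimage_bij rf_invol.bijective]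
  exact outDeg_reg R Δ hd (rf w)

lemma mOut_reg_true {α : Type*} [Fintype α] (R : α → α → Prop) (hR : Irreflexive R) (Δ : ℕ)
    (v : α) (i : ZMod (Δ+1)) :
    mOut (reg R Δ) (v, true, i) = mIn R v := by
  have hinv : Function.Involutive
      (Prod.map sf sf : (α × Bool × ZMod (Δ+1)) × (α × Bool × ZMod (Δ+1)) → _) := by
    intro ⟨a, b⟩
    simp [Prod.map, sf_invol a, sf_invol b]
  have hset : {q : (α × Bool × ZMod (Δ+1)) × (α × Bool × ZMod (Δ+1)) |
        reg R Δ (v, true, i) q.1 ∧ reg R Δ (v, true, i) q.2 ∧ reg R Δ q.1 q.2} =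
      (Prod.map sf sf) ⁻¹' {q | reg (flip R) Δ (v, false, i) q.1 ∧
        reg (flip R) Δ (v, false, i) q.2 ∧ reg (flip R) Δ q.1 q.2} := by
    ext ⟨a, b⟩
    exact and_congr (reg_sf ..) (and_congr (reg_sf ..) (reg_sf ..))
  rw [mOut, hset, ncard_preimage_bij hinv.bijective]
  have := mOut_reg_false (flip R) (fun x h => hR x h) Δ v i
  rw [mOut] at this
  rw [this, mOut_flip]

lemma mIn_reg_eq {α : Type*} [Fintype α] (R : α → α → Prop) (Δ : ℕ)
    (w : α × Bool × ZMod (Δ+1)) :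
    mIn (reg R Δ) w = mOut (reg R Δ) (rf w) := by
  have hinv : Function.Involutive
      (fun q : (α × Bool × ZMod (Δ+1)) × (α × Bool × ZMod (Δ+1)) => (rf q.2, rf q.1)) := by
    intro ⟨a, b⟩
    simp [rf_invol a, rf_invol b]
  have hset : {q : (α × Bool × ZMod (Δ+1)) × (α × Bool × ZMod (Δ+1)) |
        reg R Δ q.1 w ∧ reg R Δ q.2 w ∧ reg R Δ q.1 q.2} =
      (fun q => (rf q.2, rf q.1)) ⁻¹' {q | reg R Δ (rf w) q.1 ∧
        reg R Δ (rf w) q.2 ∧ reg R Δ q.1 q.2} := by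
    ext ⟨a, b⟩
    simp only [Set.mem_setOf_eq, Set.mem_preimage]
    constructor
    · rintro ⟨h1, h2, h12⟩
      exact ⟨(reg_rf R Δ w b).mp h2, (reg_rf R Δ w a).mp h1, (reg_rf R Δ b a).mp h12⟩
    · rintro ⟨h1, h2, h12⟩
      exact ⟨(reg_rf R Δ w a).mpr h2, (reg_rf R Δ w b).mpr h1, (reg_rf R Δ b a).mpr h12⟩
  rw [mIn, hset, ncard_preimage_bij hinv.bijective, mOut]

lemma dichrom_le {V W : Type*} [Fintype W] (A : V → V → Prop) (H : W → W → Prop)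
    (hH : Irreflexive H) (f : V → W) (hf : ∀ a b, A a b → H (f a) (f b)) :
    dichrom A ≤ dichrom H := by
  have key : ∀ x y : W, ¬ (H x y ∧ (Fintype.equivFin W) x = (Fintype.equivFin W) y) := by
    rintro x y ⟨h1, h2⟩
    obtain rfl := (Fintype.equivFin W).injective h2
    exact hH x h1
  have hne : {k | ∃ c : W → Fin k, IsDicol H c}.Nonempty := by
    refine ⟨Fintype.card W, Fintype.equivFin W, ?_⟩
    intro w hw
    cases hw with
    | single h => exact key _ _ h
    | tail _ h => exact key _ _ h
  obtain ⟨c, hc⟩ := Nat.sInf_mem hne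
  refine Nat.sInf_le ⟨fun v => c (f v), ?_⟩
  intro v hv
  exact hc (f v) (hv.lift f (fun a b hab => ⟨hf a b hab.1, hab.2⟩))

end S10

theorem stmt_10 {V : Type*} [Fintype V] (A : V → V → Prop) (hirr : Irreflexive A)
    (B Δ : ℕ)
    (hΔ : (Finset.univ.sup fun v => max (outDeg A v) (inDeg A v)) = Δ)
    (hsparse : ∀ v, min (mOut A v) (mIn A v) ≤ Δ * (Δ - 1) - B) :
    ∃ (W : Type) (_ : Fintype W) (H : W → W → Prop),
      Irreflexive H ∧
      (∀ w, min (mOut H w) (mIn H w) ≤ Δ * (Δ - 1) - B) ∧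
      (∀ w, outDeg H w = Δ ∧ inDeg H w = Δ) ∧
      dichrom A ≤ dichrom H := by
  classical
  set n := Fintype.card V with hn
  set e := Fintype.equivFin V with he
  set R : Fin n → Fin n → Prop := fun x y => A (e.symm x) (e.symm y) with hR
  have hRirr : Irreflexive R := fun x h => hirr _ h
  have houtR : ∀ x, outDeg R x = outDeg A (e.symm x) := by
    intro x
    rw [outDeg, show {u | R x u} = ⇑e.symm ⁻¹' {w | A (e.symm x) w} from rfl,
      S10.ncard_preimage_bij e.symm.bijective, outDeg]
  have hinR : ∀ x, inDeg R x = inDeg A (e.symm x) := by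
    intro x
    rw [inDeg, show {u | R u x} = ⇑e.symm ⁻¹' {w | A w (e.symm x)} from rfl,
      S10.ncard_preimage_bij e.symm.bijective, inDeg]
  have hmOutR : ∀ x, mOut R x = mOut A (e.symm x) := by
    intro x
    rw [mOut, show {q : Fin n × Fin n | R x q.1 ∧ R x q.2 ∧ R q.1 q.2} =
      (Prod.map ⇑e.symm ⇑e.symm) ⁻¹'
        {q : V × V | A (e.symm x) q.1 ∧ A (e.symm x) q.2 ∧ A q.1 q.2} from rfl,
      S10.ncard_preimage_bij (e.symm.bijective.prodMap e.symm.bijective), mOut]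
  have hmInR : ∀ x, mIn R x = mIn A (e.symm x) := by
    intro x
    rw [mIn, show {q : Fin n × Fin n | R q.1 x ∧ R q.2 x ∧ R q.1 q.2} =
      (Prod.map ⇑e.symm ⇑e.symm) ⁻¹'
        {q : V × V | A q.1 (e.symm x) ∧ A q.2 (e.symm x) ∧ A q.1 q.2} from rfl,
      S10.ncard_preimage_bij (e.symm.bijective.prodMap e.symm.bijective), mIn]
  have hmax : ∀ v : V, outDeg A v ≤ Δ ∧ inDeg A v ≤ Δ := by
    intro v
    have := hΔ ▸ Finset.le_sup (f := fun v => max (outDeg A v) (inDeg A v)) (Finset.mem_univ v)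
    exact ⟨le_trans (le_max_left _ _) this, le_trans (le_max_right _ _) this⟩
  have hdeg : ∀ x, outDeg R x ≤ Δ ∧ inDeg R x ≤ Δ := by
    intro x
    rw [houtR, hinR]
    exact hmax _
  refine ⟨Fin n × Bool × ZMod (Δ+1), inferInstance, S10.reg R Δ,
    S10.reg_irrefl R hRirr Δ, ?_, ?_, ?_⟩
  · rintro ⟨v, b, i⟩
    cases b
    · rw [S10.mOut_reg_false R hRirr Δ v i, S10.mIn_reg_eq,
        show S10.rf ((v, false, i) : Fin n × Bool × ZMod (Δ+1)) = (v, true, -i) from rfl,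
        S10.mOut_reg_true R hRirr Δ v (-i), hmOutR, hmInR]
      exact hsparse _
    · rw [S10.mOut_reg_true R hRirr Δ v i, S10.mIn_reg_eq,
        show S10.rf ((v, true, i) : Fin n × Bool × ZMod (Δ+1)) = (v, false, -i) from rfl,
        S10.mOut_reg_false R hRirr Δ v (-i), hmOutR, hmInR, min_comm]
      exact hsparse _
  · intro w
    exact ⟨S10.outDeg_reg R Δ hdeg w, S10.inDeg_reg R Δ hdeg w⟩
  · refine S10.dichrom_le A (S10.reg R Δ) (S10.reg_irrefl R hRirr Δ)
      (fun v => (e v, false, 0)) ?_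
    intro a b hab
    exact (S10.reg_false_iff ..).mpr (Or.inl ⟨rfl, rfl, by simpa [hR] using hab⟩)
end
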